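/- arXiv:1902.01383 — 2 statements merged into one kernel-verified Lean document; each statement's English description precedes it below -/
import Mathlib

section
/- Let $V$ be a finite-dimensional real vector space, fix $l$, and let $(W_m)$ be a sequence in the Grassmannian $\mathrm{Gr}_l(V)$ of $l$-dimensional subspaces, and $W \in \mathrm{Gr}_l(V)$. Then $W_m \to W$ in the Chabauty topology if and only if the following condition holds: for every subsequence $(m_k)$ and points $w_{m_k} \in W_{m_k}$ with $w_{m_k} \to w$ in $V$, one has $w \in W$. -/
open Module

/-- The Chabauty–Fell topology on the space of linear subspaces (each of which
is a closed subset) of a finite-dimensional real vector space. -/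
def fellTopologyGr (E : Type*) [NormedAddCommGroup E] [NormedSpace ℝ E] :
    TopologicalSpace (Submodule ℝ E) :=
  TopologicalSpace.generateFrom
    ({S | ∃ U : Set E, IsOpen U ∧ S = {W : Submodule ℝ E | ((W : Set E) ∩ U).Nonempty}} ∪
     {S | ∃ K : Set E, IsCompact K ∧ S = {W : Submodule ℝ E | (W : Set E) ∩ K = ∅}})

/-!
Convergence in the Fell topology means: `W_m` eventually meets every open set meeting `W`, and
eventually misses every compact set missing `W`. The second half is equivalent to (C1) by
sequential compactness and local compactness. For the first half, pick a frame of each `W_m`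
that is orthonormal for an auxiliary Euclidean structure; along a subsequence the frames converge,
by (C1) the limit frame lies in `W`, and being orthonormal it spans the `l`-dimensional space `W`.
Every `v ∈ W` is then a limit of the corresponding linear combinations of the frames of `W_m`.
-/

open Filter Topology Set

section UpperLimit

variable {X : Type*} [TopologicalSpace X]

/-- Condition (C1): the Kuratowski upper limit of the sets `W m` is contained in `S`. -/
def UpperLimitSubset (W : ℕ → Set X) (S : Set X) : Prop :=
  ∀ φ : ℕ → ℕ, StrictMono φ → ∀ w : ℕ → X, (∀ j, w j ∈ W (φ j)) →
    ∀ x : X, Tendsto w atTop (𝓝 x) → x ∈ S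

theorem UpperLimitSubset.comp {W : ℕ → Set X} {S : Set X} (h : UpperLimitSubset W S)
    {φ : ℕ → ℕ} (hφ : StrictMono φ) : UpperLimitSubset (W ∘ φ) S :=
  fun ψ hψ w hw x hx => h (φ ∘ ψ) (hφ.comp hψ) w hw x hx

theorem UpperLimitSubset.eventually_inter_eq_empty [FirstCountableTopology X]
    {W : ℕ → Set X} {S K : Set X} (h : UpperLimitSubset W S) (hK : IsCompact K)
    (hSK : S ∩ K = ∅) : ∀ᶠ m in atTop, W m ∩ K = ∅ := by
  by_contra hcon
  obtain ⟨φ, hφ, hmeet⟩ := extraction_of_frequently_atTop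
    (not_eventually.mp hcon |>.mono fun _ hm => nonempty_iff_ne_empty.mpr hm)
  choose w hwW hwK using hmeet
  obtain ⟨x, hxK, ψ, hψ, hx⟩ := hK.tendsto_subseq hwK
  have hxS : x ∈ S := h (φ ∘ ψ) (hφ.comp hψ) (w ∘ ψ) (fun j => hwW (ψ j)) x hx
  exact (eq_empty_iff_forall_notMem.mp hSK) x ⟨hxS, hxK⟩

theorem upperLimitSubset_of_eventually_inter_eq_empty [LocallyCompactSpace X]
    {W : ℕ → Set X} {S : Set X} (hS : IsClosed S)
    (h : ∀ K, IsCompact K → S ∩ K = ∅ → ∀ᶠ m in atTop, W m ∩ K = ∅) :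
    UpperLimitSubset W S := by
  intro φ hφ w hw x hx
  by_contra hxS
  obtain ⟨K, hKx, hKS, hK⟩ := local_compact_nhds (hS.isOpen_compl.mem_nhds hxS)
  have hmiss : ∀ᶠ j in atTop, W (φ j) ∩ K = ∅ :=
    hφ.tendsto_atTop.eventually (h K hK (disjoint_compl_right.mono_right hKS).inter_eq)
  obtain ⟨j, hjW, hjK⟩ := (hmiss.and (hx.eventually_mem hKx)).exists
  exact (eq_empty_iff_forall_notMem.mp hjW) (w j) ⟨hw j, hjK⟩

end UpperLimit

section Frames

variable {E F : Type*} [NormedAddCommGroup E] [NormedSpace ℝ E]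
  [NormedAddCommGroup F] [InnerProductSpace ℝ F]

theorem isClosed_setOf_orthonormal (ι : Type*) : IsClosed {v : ι → F | Orthonormal ℝ v} := by
  classical
  simp only [orthonormal_iff_ite, ofPred_forall]
  exact isClosed_iInter fun i => isClosed_iInter fun j =>
    isClosed_eq ((continuous_apply i).inner (continuous_apply j)) continuous_const

theorem isCompact_setOf_orthonormal [FiniteDimensional ℝ F] (ι : Type*) [Finite ι] :
    IsCompact {v : ι → F | Orthonormal ℝ v} :=
  (isCompact_univ_pi fun _ => isCompact_closedBall (0 : F) 1).of_isClosed_subset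
    (isClosed_setOf_orthonormal ι) fun _ hv i _ => by simp [hv.1 i]

theorem Submodule.exists_orthonormal_frame [FiniteDimensional ℝ E] (e : E ≃L[ℝ] F)
    {l : ℕ} (U : Submodule ℝ E) (hU : finrank ℝ U = l) :
    ∃ c : Fin l → E, (∀ i, c i ∈ U) ∧ Orthonormal ℝ (e ∘ c) := by
  have hUe : finrank ℝ (U.map (e : E →ₗ[ℝ] F)) = l := by
    rw [← hU]; exact LinearEquiv.finrank_map_eq e.toLinearEquiv U
  let B := (stdOrthonormalBasis ℝ (U.map (e : E →ₗ[ℝ] F))).reindex (finCongr hUe)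
  refine ⟨fun i => e.symm (B i), fun i => ?_, ?_⟩
  · obtain ⟨y, hy, hye⟩ := (B i).2
    show e.symm (B i : F) ∈ U
    rwa [← hye, LinearEquiv.coe_coe, e.coe_toLinearEquiv, e.symm_apply_apply]
  · convert B.orthonormal.comp_linearIsometry (U.map (e : E →ₗ[ℝ] F)).subtypeₗᵢ using 1
    ext i
    simp

end Frames

section Approximation

variable {E : Type*} [NormedAddCommGroup E] [NormedSpace ℝ E]

theorem exists_tendsto_of_mem_span {ι : Type*} [Fintype ι] {U : ℕ → Submodule ℝ E}
    {c : ℕ → ι → E} (hc : ∀ j i, c j i ∈ U j) {b : ι → E}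
    (hb : ∀ i, Tendsto (fun j => c j i) atTop (𝓝 (b i)))
    {v : E} (hv : v ∈ Submodule.span ℝ (range b)) :
    ∃ u : ℕ → E, (∀ j, u j ∈ U j) ∧ Tendsto u atTop (𝓝 v) := by
  obtain ⟨d, rfl⟩ := (Submodule.mem_span_range_iff_exists_fun ℝ).mp hv
  exact ⟨fun j => ∑ i, d i • c j i,
    fun j => Submodule.sum_mem _ fun i _ => Submodule.smul_mem _ _ (hc j i),
    tendsto_finsetSum _ fun i _ => (hb i).const_smul (d i)⟩

variable [FiniteDimensional ℝ E]

theorem UpperLimitSubset.exists_tendsto_of_finrank_eq {l : ℕ} {U : ℕ → Submodule ℝ E}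
    {W : Submodule ℝ E} (h : UpperLimitSubset (fun j => (U j : Set E)) W)
    (hU : ∀ j, finrank ℝ (U j) = l) (hW : finrank ℝ W = l) {v : E} (hv : v ∈ W) :
    ∃ ψ : ℕ → ℕ, StrictMono ψ ∧
      ∃ u : ℕ → E, (∀ j, u j ∈ U (ψ j)) ∧ Tendsto u atTop (𝓝 v) := by
  let e : E ≃L[ℝ] EuclideanSpace ℝ (Fin (finrank ℝ E)) := toEuclidean
  choose c hcU hc using fun j => (U j).exists_orthonormal_frame e (hU j)
  obtain ⟨b, hb, ψ, hψ, hlim⟩ :=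
    (isCompact_setOf_orthonormal (Fin l)).tendsto_subseq (x := fun j => e ∘ c j) hc
  have hc_lim (i : Fin l) : Tendsto (fun j => c (ψ j) i) atTop (𝓝 (e.symm (b i))) :=
    ((e.symm.continuous.tendsto _).comp ((continuous_apply i).tendsto _ |>.comp hlim)).congr
      fun j => by simp
  have hbW : ∀ i, e.symm (b i) ∈ W := fun i =>
    h ψ hψ _ (fun j => hcU (ψ j) i) _ (hc_lim i)
  have hindep : LinearIndependent ℝ (e.symm ∘ b) :=
    hb.linearIndependent.map' e.symm.toLinearEquiv.toLinearMap e.symm.toLinearEquiv.ker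
  have hspan : Submodule.span ℝ (range (e.symm ∘ b)) = W :=
    Submodule.eq_of_le_of_finrank_eq (Submodule.span_le.mpr (range_subset_iff.mpr hbW))
      (by rw [finrank_span_eq_card hindep, hW, Fintype.card_fin])
  exact ⟨ψ, hψ, exists_tendsto_of_mem_span (fun j i => hcU (ψ j) i) hc_lim (hspan ▸ hv)⟩

theorem UpperLimitSubset.eventually_inter_nonempty {l : ℕ} {U : ℕ → Submodule ℝ E}
    {W : Submodule ℝ E} (h : UpperLimitSubset (fun j => (U j : Set E)) W)
    (hU : ∀ j, finrank ℝ (U j) = l) (hW : finrank ℝ W = l) {O : Set E} (hO : IsOpen O)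
    (hWO : ((W : Set E) ∩ O).Nonempty) : ∀ᶠ m in atTop, ((U m : Set E) ∩ O).Nonempty := by
  obtain ⟨v, hvW, hvO⟩ := hWO
  by_contra hcon
  obtain ⟨φ, hφ, hmiss⟩ := extraction_of_frequently_atTop (not_eventually.mp hcon)
  obtain ⟨ψ, -, u, hu, hlim⟩ :=
    (h.comp hφ).exists_tendsto_of_finrank_eq (fun j => hU (φ j)) hW hvW
  obtain ⟨j, hj⟩ := (hlim.eventually_mem (hO.mem_nhds hvO)).exists
  exact hmiss (ψ j) ⟨u j, hu j, hj⟩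

end Approximation

theorem tendsto_fellTopologyGr_iff {E ι : Type*} [NormedAddCommGroup E] [NormedSpace ℝ E]
    {f : Filter ι} (W : ι → Submodule ℝ E) (W' : Submodule ℝ E) :
    Tendsto W f (@nhds _ (fellTopologyGr E) W') ↔
      (∀ O : Set E, IsOpen O → ((W' : Set E) ∩ O).Nonempty →
        ∀ᶠ m in f, ((W m : Set E) ∩ O).Nonempty) ∧
      (∀ K : Set E, IsCompact K → (W' : Set E) ∩ K = ∅ → ∀ᶠ m in f, (W m : Set E) ∩ K = ∅) := by
  rw [fellTopologyGr, TopologicalSpace.tendsto_nhds_generateFrom_iff]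
  refine ⟨fun h => ⟨fun O hO => h _ (.inl ⟨O, hO, rfl⟩), fun K hK => h _ (.inr ⟨K, hK, rfl⟩)⟩,
    ?_⟩
  rintro ⟨hmeet, hmiss⟩ s (⟨O, hO, rfl⟩ | ⟨K, hK, rfl⟩)
  exacts [hmeet O hO, hmiss K hK]

/-- Within the Grassmannian `Gr_l(V)` of `l`-dimensional subspaces, Chabauty
convergence `W_m → W` is equivalent to condition (C1): every convergent
sequence of points `w_{m_k} ∈ W_{m_k}` has its limit in `W`. -/
theorem stmt9 (E : Type*) [NormedAddCommGroup E] [NormedSpace ℝ E]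
    [FiniteDimensional ℝ E] (l : ℕ)
    (W : ℕ → Submodule ℝ E) (W' : Submodule ℝ E)
    (hdim : ∀ m, finrank ℝ (W m) = l) (hdim' : finrank ℝ W' = l) :
    Filter.Tendsto W Filter.atTop (@nhds _ (fellTopologyGr E) W') ↔
      ∀ φ : ℕ → ℕ, StrictMono φ → ∀ w : ℕ → E, (∀ j, w j ∈ W (φ j)) →
        ∀ x : E, Filter.Tendsto w Filter.atTop (nhds x) → x ∈ W' := by
  change _ ↔ UpperLimitSubset (fun m => (W m : Set E)) W'
  rw [tendsto_fellTopologyGr_iff]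
  exact ⟨fun ⟨_, hmiss⟩ =>
      upperLimitSubset_of_eventually_inter_eq_empty W'.closed_of_finiteDimensional hmiss,
    fun h => ⟨fun O hO => h.eventually_inter_nonempty hdim hdim' hO,
      fun K hK => h.eventually_inter_eq_empty hK⟩⟩
end

section
/- Let $V$ be a finite-dimensional real vector space, let $0 \leq l \leq k \leq \dim V - 1$, and let $X_{k,l} := \{(p_0,\dots,p_k) \in \mathbb{P}(V)^{k+1} \mid \dim \mathrm{span}(p_0,\dots,p_k) = l+1\}$. Then the map $\mathrm{span}: X_{k,l} \to \mathrm{Gr}_{l+1}(V)$ sending a tuple of lines to the linear span of their union is continuous. Consequently, $\mathrm{span}: \mathbb{P}(V)^{k+1} \to \mathrm{Gr}(V)$ is a Borel measurable map. -/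
open Module

/-- The quotient topology on real projective space. -/
noncomputable instance projTop (E : Type*) [NormedAddCommGroup E] [NormedSpace ℝ E] :
    TopologicalSpace (Projectivization ℝ E) :=
  TopologicalSpace.coinduced (Projectivization.mk' ℝ) inferInstance

/-- The span of a tuple of lines (points of projective space). -/
noncomputable def spanMap (E : Type*) [NormedAddCommGroup E] [NormedSpace ℝ E] (k : ℕ)
    (p : Fin (k + 1) → Projectivization ℝ E) : Submodule ℝ E :=
  ⨆ i, (p i).submodule

/-!
Lift to tuples of nonzero vectors through the open quotient map `E ∖ {0} → ℙ(E)`. There,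
meeting an open set is an open condition, and the rank of the span is lower semicontinuous
because a basis extracted from the family stays independent under small perturbations. On a
rank stratum that perturbed basis still spans, and if the span misses a compact set `K`, then
adjoining any point of `K` to the basis keeps it independent, uniformly along `K` by the tube
lemma; so missing `K` is stable as well. The strata are countably many Borel sets (differences
of open sets) covering the domain, which gives measurability.
-/

open Set Submodule Filter Topology
open scoped LinearAlgebra.Projectivization

section SpanOfFamily

variable {𝕜 E ι : Type*} [NontriviallyNormedField 𝕜] [NormedAddCommGroup E] [NormedSpace 𝕜 E]

theorem isOpen_setOf_span_inter_nonempty [Fintype ι] {U : Set E} (hU : IsOpen U) :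
    IsOpen {u : ι → E | ((span 𝕜 (range u) : Set E) ∩ U).Nonempty} := by
  have hunion : {u : ι → E | ((span 𝕜 (range u) : Set E) ∩ U).Nonempty} =
      ⋃ c : ι → 𝕜, (fun u : ι → E => ∑ i, c i • u i) ⁻¹' U := by
    ext u
    simp only [mem_ofPred_eq, mem_iUnion, mem_preimage, SetLike.mem_coe,
      mem_span_range_iff_exists_fun, Set.Nonempty, mem_inter_iff]
    constructor
    · rintro ⟨x, ⟨c, rfl⟩, hx⟩
      exact ⟨c, hx⟩
    · rintro ⟨c, hc⟩
      exact ⟨_, ⟨c, rfl⟩, hc⟩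
  rw [hunion]
  exact isOpen_iUnion fun c => hU.preimage (by fun_prop)

variable [CompleteSpace 𝕜] [Finite ι]

theorem eventually_finrank_span_le (u : ι → E) :
    ∀ᶠ v in 𝓝 u, finrank 𝕜 (span 𝕜 (range u)) ≤ finrank 𝕜 (span 𝕜 (range v)) := by
  obtain ⟨κ, a, ha, hspan, hli⟩ := exists_linearIndependent' 𝕜 u
  have : Finite κ := Finite.of_injective a ha
  have : Fintype κ := Fintype.ofFinite κ
  have hcont : Continuous fun v : ι → E => v ∘ a := by fun_prop
  filter_upwards [hcont.continuousAt.eventually hli.eventually] with v hv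
  calc finrank 𝕜 (span 𝕜 (range u)) = finrank 𝕜 (span 𝕜 (range (v ∘ a))) := by
        rw [← hspan, finrank_span_eq_card hli, finrank_span_eq_card hv]
    _ ≤ finrank 𝕜 (span 𝕜 (range v)) :=
      have := FiniteDimensional.span_of_finite 𝕜 (finite_range v)
      Submodule.finrank_mono (span_mono (range_comp_subset_range a v))

theorem isOpen_setOf_le_finrank_span (m : ℕ) :
    IsOpen {u : ι → E | m ≤ finrank 𝕜 (span 𝕜 (range u))} :=
  isOpen_iff_mem_nhds.2 fun u hu =>
    (eventually_finrank_span_le u).mono fun _ hv => hu.trans hv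

theorem eventually_span_inter_eq_empty_of_finrank_le {u : ι → E} {K : Set E} (hK : IsCompact K)
    (huK : (span 𝕜 (range u) : Set E) ∩ K = ∅) :
    ∀ᶠ v in 𝓝 u, finrank 𝕜 (span 𝕜 (range v)) ≤ finrank 𝕜 (span 𝕜 (range u)) →
      (span 𝕜 (range v) : Set E) ∩ K = ∅ := by
  obtain ⟨κ, a, ha, hspan, hli⟩ := exists_linearIndependent' 𝕜 u
  have : Finite κ := Finite.of_injective a ha
  have : Fintype κ := Fintype.ofFinite κ
  let adjoin : (ι → E) × E → Option κ → E := fun z o => Option.casesOn' o z.2 (z.1 ∘ a)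
  have hadjoin : Continuous adjoin := by
    refine continuous_pi fun o => ?_
    cases o <;> simp only [adjoin, Option.casesOn'] <;> fun_prop
  have hnear : ∀ y ∈ K, ∀ᶠ z in 𝓝 (u, y), LinearIndependent 𝕜 (adjoin z) := by
    intro y hy
    refine hadjoin.continuousAt.eventually (LinearIndependent.eventually ?_)
    refine linearIndependent_option'.2 ⟨hli, fun hyspan => ?_⟩
    rw [hspan] at hyspan
    exact (eq_empty_iff_forall_notMem.1 huK) y ⟨hyspan, hy⟩
  filter_upwards [hK.eventually_forall_of_forall_eventually
    (P := fun v y => LinearIndependent 𝕜 (adjoin (v, y))) hnear] with v hv hrank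
  refine eq_empty_iff_forall_notMem.2 fun y ⟨hyv, hyK⟩ => ?_
  obtain ⟨hli', hy⟩ := linearIndependent_option'.1 (hv y hyK)
  have := FiniteDimensional.span_of_finite 𝕜 (finite_range v)
  have hspan' : span 𝕜 (range (v ∘ a)) = span 𝕜 (range v) :=
    eq_of_le_of_finrank_le (span_mono (range_comp_subset_range a v)) <| by
      rw [finrank_span_eq_card hli', ← finrank_span_eq_card hli, hspan]
      exact hrank
  exact hy (hspan' ▸ hyv)

end SpanOfFamily

namespace Projectivization

variable {E : Type*} [NormedAddCommGroup E] [NormedSpace ℝ E]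

theorem isOpenMap_mk' : IsOpenMap (mk' ℝ : {v : E // v ≠ 0} → ℙ ℝ E) := by
  intro U hU
  let scale (c : ℝˣ) (v : {v : E // v ≠ 0}) : {v : E // v ≠ 0} :=
    ⟨c • (v : E), (smul_ne_zero_iff_ne _).2 v.2⟩
  have hsat : mk' ℝ ⁻¹' (mk' ℝ '' U) = ⋃ c : ℝˣ, scale c ⁻¹' U := by
    ext v
    simp only [mem_preimage, mem_image, mem_iUnion, mk'_eq_mk, mk_eq_mk_iff]
    constructor
    · rintro ⟨w, hw, c, hc⟩
      exact ⟨c, by convert hw; exact Subtype.ext hc⟩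
    · rintro ⟨c, hc⟩
      exact ⟨_, hc, c, rfl⟩
  rw [isOpen_coinduced, hsat]
  exact isOpen_iUnion fun c => hU.preimage (by fun_prop)

theorem isOpenQuotientMap_mk' : IsOpenQuotientMap (mk' ℝ : {v : E // v ≠ 0} → ℙ ℝ E) :=
  ⟨fun p => ⟨⟨p.rep, p.rep_nonzero⟩, p.mk_rep⟩, continuous_coinduced_rng, isOpenMap_mk'⟩

theorem isOpenQuotientMap_piMap_mk' (ι : Type*) :
    IsOpenQuotientMap (Pi.map fun _ : ι => (mk' ℝ : {v : E // v ≠ 0} → ℙ ℝ E)) :=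
  ⟨.piMap fun _ => isOpenQuotientMap_mk'.surjective,
    continuous_pi fun i => isOpenQuotientMap_mk'.continuous.comp (continuous_apply i),
    .piMap (fun _ => isOpenMap_mk') (.of_forall fun _ => isOpenQuotientMap_mk'.surjective)⟩

end Projectivization

theorem measurable_of_continuousOn_of_iUnion_eq_univ {α β ι : Type*} [Countable ι]
    [TopologicalSpace α] [MeasurableSpace α] [OpensMeasurableSpace α]
    [TopologicalSpace β] [MeasurableSpace β] [BorelSpace β] {f : α → β} {s : ι → Set α}
    (hs : ∀ i, MeasurableSet (s i)) (hcov : ⋃ i, s i = univ) (hf : ∀ i, ContinuousOn f (s i)) :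
    Measurable f := by
  convert measurable_liftCover s hs (fun i => (s i).domRestrict f)
    (fun i => (hf i).domRestrict.measurable) (fun _ _ _ _ _ => rfl) hcov
  ext x
  obtain ⟨i, hi⟩ := mem_iUnion.1 (hcov ▸ mem_univ x)
  exact (liftCover_of_mem (f := fun i => (s i).domRestrict f) hi).symm

section SpanMap

open Projectivization

variable {E : Type*} [NormedAddCommGroup E] [NormedSpace ℝ E] {k : ℕ}

theorem spanMap_piMap_mk' (w : Fin (k + 1) → {v : E // v ≠ 0}) :
    spanMap E k (Pi.map (fun _ => mk' ℝ) w) = span ℝ (range fun i => (w i : E)) := by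
  simp [spanMap, span_range_eq_iSup, mk'_eq_mk, submodule_mk]

theorem isOpen_setOf_spanMap {P : Submodule ℝ E → Prop}
    (hP : IsOpen {u : Fin (k + 1) → E | P (span ℝ (range u))}) :
    IsOpen {p : Fin (k + 1) → ℙ ℝ E | P (spanMap E k p)} := by
  rw [← (isOpenQuotientMap_piMap_mk' _).isQuotientMap.isOpen_preimage]
  convert hP.preimage (f := fun (w : Fin (k + 1) → {v : E // v ≠ 0}) i => (w i : E)) (by fun_prop)
    using 1
  ext w
  simp only [mem_preimage, mem_ofPred_eq, spanMap_piMap_mk']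

theorem eventually_spanMap_inter_eq_empty_of_finrank_le {p : Fin (k + 1) → ℙ ℝ E} {K : Set E}
    (hK : IsCompact K) (hpK : (spanMap E k p : Set E) ∩ K = ∅) :
    ∀ᶠ q in 𝓝 p, finrank ℝ (spanMap E k q) ≤ finrank ℝ (spanMap E k p) →
      (spanMap E k q : Set E) ∩ K = ∅ := by
  obtain ⟨w, rfl⟩ := (isOpenQuotientMap_piMap_mk' _).surjective p
  rw [spanMap_piMap_mk'] at hpK
  rw [← (isOpenQuotientMap_piMap_mk' _).map_nhds_eq, eventually_map]
  have hcont : Continuous fun (w : Fin (k + 1) → {v : E // v ≠ 0}) i => (w i : E) := by fun_prop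
  filter_upwards [hcont.continuousAt.eventually
    (eventually_span_inter_eq_empty_of_finrank_le hK hpK)] with w' hw'
  rw [spanMap_piMap_mk', spanMap_piMap_mk']
  exact hw'

theorem continuousOn_spanMap (m : ℕ) :
    @ContinuousOn (Fin (k + 1) → ℙ ℝ E) (Submodule ℝ E) _
      (fellTopologyGr E) (spanMap E k) {p | finrank ℝ (spanMap E k p) = m} := by
  intro p hp
  refine TopologicalSpace.tendsto_nhds_generateFrom_iff.2 ?_
  rintro T (⟨U, hU, rfl⟩ | ⟨K, hK, rfl⟩) hpT
  · exact mem_nhdsWithin_of_mem_nhds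
      ((isOpen_setOf_spanMap (isOpen_setOf_span_inter_nonempty hU)).mem_nhds hpT)
  · filter_upwards [self_mem_nhdsWithin, mem_nhdsWithin_of_mem_nhds
      (eventually_spanMap_inter_eq_empty_of_finrank_le hK hpT)] with q hqm hq
    exact hq (hqm.trans hp.symm).le

theorem measurable_spanMap :
    @Measurable (Fin (k + 1) → ℙ ℝ E) (Submodule ℝ E)
      (borel _) (@borel _ (fellTopologyGr E)) (spanMap E k) := by
  let := fellTopologyGr E
  borelize (Fin (k + 1) → ℙ ℝ E) (Submodule ℝ E)
  refine measurable_of_continuousOn_of_iUnion_eq_univ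
    (s := fun m : ℕ => {p | finrank ℝ (spanMap E k p) = m}) (fun m => ?_)
    (iUnion_eq_univ_iff.2 fun p => ⟨_, rfl⟩) continuousOn_spanMap
  have hstratum : {p : Fin (k + 1) → ℙ ℝ E | finrank ℝ (spanMap E k p) = m} =
      {p | m ≤ finrank ℝ (spanMap E k p)} \ {p | m + 1 ≤ finrank ℝ (spanMap E k p)} := by
    ext p
    simp only [mem_ofPred_eq, Set.mem_sdiff]
    omega
  rw [hstratum]
  have hrank_ge (n : ℕ) : MeasurableSet {p : Fin (k + 1) → ℙ ℝ E | n ≤ finrank ℝ (spanMap E k p)} :=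
    (isOpen_setOf_spanMap (P := fun S => n ≤ finrank ℝ S)
      (isOpen_setOf_le_finrank_span n)).measurableSet
  exact (hrank_ge m).diff (hrank_ge (m + 1))

end SpanMap

theorem stmt13_general (E : Type*) [NormedAddCommGroup E] [NormedSpace ℝ E]
    (k l : ℕ) :
    @ContinuousOn (Fin (k + 1) → Projectivization ℝ E) (Submodule ℝ E) _
      (fellTopologyGr E) (spanMap E k)
      {p | finrank ℝ (spanMap E k p) = l + 1} ∧
    @Measurable (Fin (k + 1) → Projectivization ℝ E) (Submodule ℝ E)
      (borel _) (@borel _ (fellTopologyGr E)) (spanMap E k) :=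
  ⟨continuousOn_spanMap (l + 1), measurable_spanMap⟩

/-- The span map is continuous on the set `X_{k,l}` of tuples of lines spanning
an `(l+1)`-dimensional subspace, and consequently Borel measurable as a map
`ℙ(V)^{k+1} → Gr(V)`. -/
theorem stmt13 (E : Type*) [NormedAddCommGroup E] [NormedSpace ℝ E]
    [FiniteDimensional ℝ E] (k l : ℕ)
    (hl : l ≤ k) (hk : k ≤ finrank ℝ E - 1) :
    @ContinuousOn (Fin (k + 1) → Projectivization ℝ E) (Submodule ℝ E) _
      (fellTopologyGr E) (spanMap E k)
      {p | finrank ℝ (spanMap E k p) = l + 1} ∧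
    @Measurable (Fin (k + 1) → Projectivization ℝ E) (Submodule ℝ E)
      (borel _) (@borel _ (fellTopologyGr E)) (spanMap E k) :=
  stmt13_general E k l
end
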